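/- For every h ∈ ℂ, the super-Jordanian R-matrix in the fundamental ⊗ fundamental representation factorizes as R_h = exp(−h · e₁ ⊗ (T h₁)) · exp(h · (T h₁) ⊗ e₁) · D, where e₁ = E₁₂, h₁ = diag(1,−1,0), T = I₃ + h e₁, and D = diag(1,1,1,1,1,1,1,1,−1) is the 9×9 grading sign matrix. (This instantiates Proposition 4, R_h = exp(−h X₁ ⊗ T H₁) exp(h T H₁ ⊗ X₁) with X₁ = h⁻¹ ln T, in the fundamental representation, where ln T = h e₁ since e₁² = 0.) -/

import Mathlib

noncomputable section

namespace SuperJordanian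

open Matrix
open scoped Kronecker

/-- The super-Jordanian `R_h`-matrix in the fundamental ⊗ fundamental representation:
the identity except `(R_h)₁₂ = h`, `(R_h)₁₄ = −h`, `(R_h)₁₅ = h²`, `(R_h)₂₅ = h`,
`(R_h)₄₅ = −h`, `(R_h)₉₉ = −1`. -/
def Rh (h : ℂ) : Matrix (Fin 3 × Fin 3) (Fin 3 × Fin 3) ℂ := fun p r =>
  if p = r then (if p = (2, 2) then -1 else 1)
  else if p = (0, 0) ∧ r = (0, 1) then h
  else if p = (0, 0) ∧ r = (1, 0) then -h
  else if p = (0, 0) ∧ r = (1, 1) then h ^ 2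
  else if p = (0, 1) ∧ r = (1, 1) then h
  else if p = (1, 0) ∧ r = (1, 1) then -h
  else 0

/-- `e₁ = E₁₂` in the fundamental representation. -/
def e₁ : Matrix (Fin 3) (Fin 3) ℂ := single 0 1 1

/-- `h₁ = diag(1, −1, 0)` in the fundamental representation. -/
def h₁ : Matrix (Fin 3) (Fin 3) ℂ := diagonal ![1, -1, 0]

/-- `T = I₃ + h e₁` in the fundamental representation. -/
def T (h : ℂ) : Matrix (Fin 3) (Fin 3) ℂ := 1 + h • e₁

/-- The 9×9 grading sign matrix `D = diag(1,1,1,1,1,1,1,1,−1)`. -/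
def D : Matrix (Fin 3 × Fin 3) (Fin 3 × Fin 3) ℂ :=
  diagonal fun p => if p = (2, 2) then -1 else 1

/-!
Both exponents square to zero, because `e₁ ^ 2 = 0` sits in one tensor factor, so each
exponential is `1` plus its exponent. In the product of the two, `T` drops out: since
`e₁ h₁ = -e₁` and `h₁ e₁ = e₁`, one has `T h₁ = h₁ - h e₁`, `e₁ (T h₁) = -e₁` and
`(T h₁) e₁ = e₁`. What is left, `1 + h (h₁ ⊗ e₁ - e₁ ⊗ h₁) + h² e₁ ⊗ e₁`, is `R_h D`,
entry by entry.
-/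

theorem _root_.NormedSpace.exp_eq_one_add_of_mul_self_eq_zero {𝔸 : Type*} [Ring 𝔸]
    [Algebra ℚ 𝔸] [TopologicalSpace 𝔸] [IsTopologicalRing 𝔸] [T2Space 𝔸] {x : 𝔸}
    (hx : x * x = 0) : NormedSpace.exp x = 1 + x := by
  have hpow : ∀ n ∉ Finset.range 2, ((n.factorial : ℚ)⁻¹ • x ^ n) = 0 := fun n hn => by
    obtain ⟨k, rfl⟩ : ∃ k, n = k + 2 := ⟨n - 2, by simp at hn; omega⟩
    rw [pow_add, sq, hx, mul_zero, smul_zero]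
  rw [NormedSpace.exp_eq_tsum_rat]
  simp [tsum_eq_sum hpow, Finset.sum_range_succ]

theorem _root_.Matrix.kronecker_mul_self_eq_zero_left {l m R : Type*} [Fintype l] [Fintype m]
    [CommSemiring R] {A : Matrix l l R} (hA : A * A = 0) (B : Matrix m m R) :
    A ⊗ₖ B * A ⊗ₖ B = 0 := by
  rw [← mul_kronecker_mul, hA, zero_kronecker]

theorem _root_.Matrix.kronecker_mul_self_eq_zero_right {l m R : Type*} [Fintype l] [Fintype m]
    [CommSemiring R] (A : Matrix l l R) {B : Matrix m m R} (hB : B * B = 0) :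
    A ⊗ₖ B * A ⊗ₖ B = 0 := by
  rw [← mul_kronecker_mul, hB, kronecker_zero]

theorem e₁_mul_self : e₁ * e₁ = 0 := by
  simp [e₁]

theorem e₁_mul_h₁ : e₁ * h₁ = -e₁ := by
  ext i j; fin_cases i <;> fin_cases j <;> simp [e₁, h₁, single]

theorem h₁_mul_e₁ : h₁ * e₁ = e₁ := by
  ext i j; fin_cases i <;> fin_cases j <;> simp [e₁, h₁, single]

theorem T_mul_h₁ (h : ℂ) : T h * h₁ = h₁ - h • e₁ := by
  rw [T, add_mul, one_mul, smul_mul_assoc, e₁_mul_h₁, smul_neg, sub_eq_add_neg]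

theorem e₁_mul_T_mul_h₁ (h : ℂ) : e₁ * (T h * h₁) = -e₁ := by
  rw [T_mul_h₁, mul_sub, e₁_mul_h₁, mul_smul_comm, e₁_mul_self, smul_zero, sub_zero]

theorem T_mul_h₁_mul_e₁ (h : ℂ) : T h * h₁ * e₁ = e₁ := by
  rw [T_mul_h₁, sub_mul, h₁_mul_e₁, smul_mul_assoc, e₁_mul_self, smul_zero, sub_zero]

theorem exp_mul_exp_eq_one_add (h : ℂ) :
    NormedSpace.exp (-(h • (e₁ ⊗ₖ (T h * h₁)))) * NormedSpace.exp (h • ((T h * h₁) ⊗ₖ e₁))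
      = 1 + h • (h₁ ⊗ₖ e₁ - e₁ ⊗ₖ h₁) + h ^ 2 • (e₁ ⊗ₖ e₁) := by
  have hX := kronecker_mul_self_eq_zero_left e₁_mul_self (T h * h₁)
  have hY := kronecker_mul_self_eq_zero_right (T h * h₁) e₁_mul_self
  have hXY : e₁ ⊗ₖ (T h * h₁) * (T h * h₁) ⊗ₖ e₁ = (-1 : ℂ) • (e₁ ⊗ₖ e₁) := by
    rw [← mul_kronecker_mul, e₁_mul_T_mul_h₁, T_mul_h₁_mul_e₁, ← neg_one_smul ℂ e₁,
      smul_kronecker]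
  rw [NormedSpace.exp_eq_one_add_of_mul_self_eq_zero
      (by rw [neg_mul_neg, smul_mul_smul_comm, hX, smul_zero]),
    NormedSpace.exp_eq_one_add_of_mul_self_eq_zero (by rw [smul_mul_smul_comm, hY, smul_zero])]
  simp only [mul_add, add_mul, mul_one, one_mul, neg_mul, smul_mul_smul_comm, hXY]
  simp only [T_mul_h₁, sub_eq_add_neg, ← neg_smul, add_kronecker, kronecker_add, kronecker_smul,
    smul_kronecker]
  module

theorem Rh_eq_mul_D (h : ℂ) :
    Rh h = (1 + h • (h₁ ⊗ₖ e₁ - e₁ ⊗ₖ h₁) + h ^ 2 • (e₁ ⊗ₖ e₁)) * D := by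
  ext ⟨i, j⟩ ⟨k, l⟩
  simp only [D, mul_diagonal]
  fin_cases i <;> fin_cases j <;> fin_cases k <;> fin_cases l <;>
    simp [Rh, e₁, h₁, single, one_apply]

/-- the factorization
`R_h = exp(−h · e₁ ⊗ (T h₁)) · exp(h · (T h₁) ⊗ e₁) · D`. -/
theorem statement14 (h : ℂ) :
    Rh h = NormedSpace.exp (-(h • (e₁ ⊗ₖ (T h * h₁))))
        * NormedSpace.exp (h • ((T h * h₁) ⊗ₖ e₁)) * D := by
  rw [exp_mul_exp_eq_one_add, Rh_eq_mul_D]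

end SuperJordanian
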